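/- Let Z ≥ 0, let A be Hermitian with largest eigenvalue p and smallest eigenvalue q, and B Hermitian with largest eigenvalue r and smallest eigenvalue s. Then |Tr(Z²AB) − Tr(ZAZB)| ≤ (1/4)(p−q)(r−s)·Tr(Z²). -/

import Mathlib

/-!
Diagonalise `Z = U diag(l) U*` and put `M = U* A U`, `N = U* B U`; then
`Tr(Z²AB) - Tr(ZAZB) = ∑ᵢⱼ lᵢ (lᵢ - lⱼ) Mᵢⱼ Nⱼᵢ`. Since `Tr(Z²A) = Tr(ZAZ)`, the left-hand side is
unchanged when `A` and `B` are shifted by scalars; shifting by the midpoints of their spectra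
leaves Hermitian matrices of operator norm at most `(p - q)/2` and `(r - s)/2`. Cauchy–Schwarz
with the weights `lᵢ |lᵢ - lⱼ| ≥ 0` reduces the claim to `∑ᵢⱼ lᵢ |lᵢ - lⱼ| |Mᵢⱼ|² ≤ ‖M‖² ∑ᵢ lᵢ²`,
which follows by symmetrising in `i, j`, using `(a + b)|a - b| ≤ a² + b²`, and bounding the
squared length of each row of `M` by `‖M‖²`.
-/

open Matrix ComplexOrder

lemma add_mul_abs_sub_le_sq_add_sq (a b : ℝ) : (a + b) * |a - b| ≤ a ^ 2 + b ^ 2 := by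
  rcases abs_cases (a - b) with ⟨h, _⟩ | ⟨h, _⟩ <;> rw [h] <;> nlinarith

lemma sum_mul_abs_sub_mul_le {ι : Type*} [Fintype ι] (l : ι → ℝ) (X : ι → ι → ℝ)
    (hX : ∀ i j, X i j = X j i) (hX0 : ∀ i j, 0 ≤ X i j) {c : ℝ} (hrow : ∀ i, ∑ j, X i j ≤ c) :
    ∑ i, ∑ j, l i * |l i - l j| * X i j ≤ c * ∑ i, l i ^ 2 := by
  have hswap (f : ι → ι → ℝ) : ∑ i, ∑ j, f j i * X i j = ∑ i, ∑ j, f i j * X i j := by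
    rw [Finset.sum_comm]; simp only [hX]
  have hsym : 2 * ∑ i, ∑ j, l i * |l i - l j| * X i j
      = ∑ i, ∑ j, (l i + l j) * |l i - l j| * X i j := by
    rw [two_mul]
    nth_rw 2 [← hswap fun i j => l i * |l i - l j|]
    simp only [← Finset.sum_add_distrib, abs_sub_comm (l _) (l _)]
    refine Finset.sum_congr rfl fun i _ => Finset.sum_congr rfl fun j _ => ?_
    ring
  have hpoint : ∑ i, ∑ j, (l i + l j) * |l i - l j| * X i j
      ≤ ∑ i, ∑ j, (l i ^ 2 + l j ^ 2) * X i j :=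
    Finset.sum_le_sum fun i _ => Finset.sum_le_sum fun j _ =>
      mul_le_mul_of_nonneg_right (add_mul_abs_sub_le_sq_add_sq _ _) (hX0 i j)
  have hsq : ∑ i, ∑ j, (l i ^ 2 + l j ^ 2) * X i j = 2 * ∑ i, l i ^ 2 * ∑ j, X i j := by
    simp only [add_mul, Finset.sum_add_distrib, hswap fun i _ => l i ^ 2, Finset.mul_sum, two_mul]
  have hrows : ∑ i, l i ^ 2 * ∑ j, X i j ≤ c * ∑ i, l i ^ 2 := by
    rw [Finset.mul_sum]
    exact Finset.sum_le_sum fun i _ => by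
      rw [mul_comm c]; exact mul_le_mul_of_nonneg_left (hrow i) (sq_nonneg _)
  linarith

lemma Unitary.norm_conjStarAlgAut {S E : Type*} [NormedRing E] [StarRing E] [CStarRing E]
    [SMul S E] [IsScalarTower S E E] [SMulCommClass S E E] (U : unitary E) (x : E) :
    ‖conjStarAlgAut S E U x‖ = ‖x‖ := by
  rw [conjStarAlgAut_apply, ← coe_star, CStarRing.norm_mul_coe_unitary,
    CStarRing.norm_coe_unitary_mul]

namespace Matrix

section CommRing

variable {ι R : Type*} [Fintype ι] [CommRing R]

def traceDefect (Z A B : Matrix ι ι R) : R :=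
  trace (Z * Z * A * B) - trace (Z * A * Z * B)

lemma traceDefect_sub_smul_one [DecidableEq ι] (Z A B : Matrix ι ι R) (a b : R) :
    traceDefect Z (A - a • 1) (B - b • 1) = traceDefect Z A B := by
  have h : trace (Z * Z * A) = trace (Z * A * Z) := by
    rw [Matrix.mul_assoc, trace_mul_comm]
  simp only [traceDefect, Matrix.mul_sub, Matrix.sub_mul, Matrix.mul_smul, Matrix.smul_mul,
    Matrix.mul_one, trace_sub, trace_smul, h]
  ring

lemma traceDefect_diagonal [DecidableEq ι] (l : ι → R) (M N : Matrix ι ι R) :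
    traceDefect (diagonal l) M N = ∑ i, ∑ j, l i * (l i - l j) * (M i j * N j i) := by
  simp only [traceDefect, trace, diag, mul_apply, diagonal, of_apply, ite_mul, zero_mul,
    mul_ite, mul_zero, Finset.sum_ite_eq, Finset.sum_ite_eq', Finset.mem_univ, if_true,
    ← Finset.sum_sub_distrib]
  refine Finset.sum_congr rfl fun i _ => Finset.sum_congr rfl fun j _ => ?_
  ring

variable [StarRing R] [DecidableEq ι]

lemma trace_conjStarAlgAut (U : unitaryGroup ι R) (X : Matrix ι ι R) :
    trace (Unitary.conjStarAlgAut R _ U X) = trace X := by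
  rw [Unitary.conjStarAlgAut_apply, trace_mul_cycle, Unitary.coe_star_mul_self, Matrix.one_mul]

lemma traceDefect_conjStarAlgAut (U : unitaryGroup ι R) (Z A B : Matrix ι ι R) :
    traceDefect (Unitary.conjStarAlgAut R _ U Z) (Unitary.conjStarAlgAut R _ U A)
      (Unitary.conjStarAlgAut R _ U B) = traceDefect Z A B := by
  simp only [traceDefect, ← map_mul, trace_conjStarAlgAut]

end CommRing

lemma IsHermitian.norm_apply_comm {ι 𝕜 : Type*} [RCLike 𝕜] {C : Matrix ι ι 𝕜}
    (hC : C.IsHermitian) (i j : ι) : ‖C i j‖ = ‖C j i‖ := by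
  rw [← hC.apply i j, norm_star]

section L2OpNorm

open scoped Norms.L2Operator

variable {ι 𝕜 : Type*} [Fintype ι] [DecidableEq ι] [RCLike 𝕜]

lemma sum_norm_sq_apply_le {m n : Type*} [Fintype m] [Fintype n] [DecidableEq n]
    (C : Matrix m n 𝕜) (j : n) : ∑ i, ‖C i j‖ ^ 2 ≤ ‖C‖ ^ 2 := by
  have h := C.l2_opNorm_mulVec (EuclideanSpace.single j 1)
  rw [PiLp.norm_single, norm_one, mul_one, ← sq_le_sq₀ (norm_nonneg _) (norm_nonneg _),
    EuclideanSpace.norm_sq_eq] at h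
  simpa using h

lemma IsHermitian.norm_sub_midpoint_smul_one_le [Nonempty ι] {A : Matrix ι ι 𝕜}
    (hA : A.IsHermitian) {p q : ℝ} (h : ∀ i, hA.eigenvalues i ∈ Set.Icc q p) :
    ‖A - (((p + q) / 2 : ℝ) : 𝕜) • 1‖ ≤ (p - q) / 2 := by
  have hshift : A - (((p + q) / 2 : ℝ) : 𝕜) • 1 = Unitary.conjStarAlgAut 𝕜 _ hA.eigenvectorUnitary
      (diagonal fun i => ((hA.eigenvalues i - (p + q) / 2 : ℝ) : 𝕜)) := by
    conv_lhs => rw [hA.spectral_theorem]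
    rw [← map_one (Unitary.conjStarAlgAut 𝕜 _ hA.eigenvectorUnitary), ← map_smul, ← map_sub,
      smul_one_eq_diagonal, diagonal_sub]
    congr 2; ext i; simp
  have hqp : q ≤ p := (h (Classical.arbitrary ι)).1.trans (h _).2
  rw [hshift, Unitary.norm_conjStarAlgAut, l2_opNorm_diagonal]
  refine (pi_norm_le_iff_of_nonneg (by linarith)).mpr fun i => ?_
  rw [RCLike.norm_ofReal, abs_le]
  constructor <;> linarith [(h i).1, (h i).2]

lemma IsHermitian.sum_mul_abs_sub_mul_norm_sq_le {C : Matrix ι ι 𝕜} (hC : C.IsHermitian)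
    (l : ι → ℝ) : ∑ i, ∑ j, l i * |l i - l j| * ‖C i j‖ ^ 2 ≤ ‖C‖ ^ 2 * ∑ i, l i ^ 2 :=
  sum_mul_abs_sub_mul_le l _ (fun i j => by rw [hC.norm_apply_comm]) (fun _ _ => by positivity)
    fun i => by simpa only [hC.norm_apply_comm i] using C.sum_norm_sq_apply_le i

lemma norm_traceDefect_diagonal_le {l : ι → ℝ} (hl : 0 ≤ l) {C D : Matrix ι ι 𝕜}
    (hC : C.IsHermitian) (hD : D.IsHermitian) :
    ‖traceDefect (diagonal fun i => (l i : 𝕜)) C D‖ ≤ ‖C‖ * ‖D‖ * ∑ i, l i ^ 2 := by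
  have hw (i j : ι) : 0 ≤ l i * |l i - l j| := mul_nonneg (hl i) (abs_nonneg _)
  have htriangle : ‖traceDefect (diagonal fun i => (l i : 𝕜)) C D‖
      ≤ ∑ i, ∑ j, l i * |l i - l j| * (‖C i j‖ * ‖D i j‖) := by
    rw [traceDefect_diagonal]
    refine (norm_sum_le _ _).trans <| Finset.sum_le_sum fun i _ =>
      (norm_sum_le _ _).trans_eq <| Finset.sum_congr rfl fun j _ => ?_
    rw [norm_mul, norm_mul, norm_mul, ← RCLike.ofReal_sub, RCLike.norm_ofReal, RCLike.norm_ofReal,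
      abs_of_nonneg (hl i), hD.norm_apply_comm]
  have hcs := Finset.sum_sq_le_sum_mul_sum_of_sq_le_mul Finset.univ
    (r := fun x : ι × ι => l x.1 * |l x.1 - l x.2| * (‖C x.1 x.2‖ * ‖D x.1 x.2‖))
    (f := fun x => l x.1 * |l x.1 - l x.2| * ‖C x.1 x.2‖ ^ 2)
    (g := fun x => l x.1 * |l x.1 - l x.2| * ‖D x.1 x.2‖ ^ 2)
    (fun x _ => mul_nonneg (hw _ _) (sq_nonneg _)) (fun x _ => mul_nonneg (hw _ _) (sq_nonneg _))
    (fun x _ => le_of_eq (by ring))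
  simp only [Fintype.sum_prod_type] at hcs
  refine htriangle.trans (abs_le_of_sq_le_sq' ?_ (by positivity)).2
  calc _ ≤ _ := hcs
    _ ≤ (‖C‖ ^ 2 * ∑ i, l i ^ 2) * (‖D‖ ^ 2 * ∑ i, l i ^ 2) :=
      mul_le_mul (hC.sum_mul_abs_sub_mul_norm_sq_le l) (hD.sum_mul_abs_sub_mul_norm_sq_le l)
        (Finset.sum_nonneg fun i _ => Finset.sum_nonneg fun j _ => mul_nonneg (hw i j) (sq_nonneg _))
        (by positivity)
    _ = _ := by ring

theorem PosSemidef.norm_traceDefect_le {Z A B : Matrix ι ι 𝕜} (hZ : Z.PosSemidef)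
    (hA : A.IsHermitian) (hB : B.IsHermitian) :
    ‖traceDefect Z A B‖ ≤ ‖A‖ * ‖B‖ * RCLike.re (trace (Z * Z)) := by
  set φ := Unitary.conjStarAlgAut 𝕜 (Matrix ι ι 𝕜) hZ.1.eigenvectorUnitary
  set l := hZ.1.eigenvalues
  have hZ_eq : Z = φ (diagonal fun i => (l i : 𝕜)) := hZ.1.spectral_theorem
  have hnorm (X : Matrix ι ι 𝕜) : ‖φ.symm X‖ = ‖X‖ := by
    rw [Unitary.conjStarAlgAut_symm, Unitary.norm_conjStarAlgAut]
  have htrace : RCLike.re (trace (Z * Z)) = ∑ i, l i ^ 2 := by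
    rw [hZ_eq, ← map_mul, trace_conjStarAlgAut, diagonal_mul_diagonal, trace_diagonal, map_sum]
    simp [sq]
  have hdefect : traceDefect Z A B
      = traceDefect (diagonal fun i => (l i : 𝕜)) (φ.symm A) (φ.symm B) := by
    conv_lhs => rw [hZ_eq, ← φ.apply_symm_apply A, ← φ.apply_symm_apply B]
    exact traceDefect_conjStarAlgAut _ _ _ _
  rw [hdefect, htrace, ← hnorm A, ← hnorm B]
  exact norm_traceDefect_diagonal_le hZ.eigenvalues_nonneg (hA.isSelfAdjoint.map φ.symm)
    (hB.isSelfAdjoint.map φ.symm)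

theorem PosSemidef.norm_traceDefect_le_of_eigenvalues_mem_Icc [Nonempty ι]
    {Z A B : Matrix ι ι 𝕜} (hZ : Z.PosSemidef) (hA : A.IsHermitian) (hB : B.IsHermitian)
    {p q r s : ℝ} (hApq : ∀ i, hA.eigenvalues i ∈ Set.Icc q p)
    (hBrs : ∀ i, hB.eigenvalues i ∈ Set.Icc s r) :
    ‖traceDefect Z A B‖ ≤ (p - q) / 2 * ((r - s) / 2) * RCLike.re (trace (Z * Z)) := by
  have hA' := hA.norm_sub_midpoint_smul_one_le hApq
  have hB' := hB.norm_sub_midpoint_smul_one_le hBrs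
  have htrace : 0 ≤ RCLike.re (trace (Z * Z)) :=
    (RCLike.nonneg_iff.1 (hZ.1.eq ▸ posSemidef_conjTranspose_mul_self Z).trace_nonneg).1
  calc ‖traceDefect Z A B‖
      = ‖traceDefect Z (A - (((p + q) / 2 : ℝ) : 𝕜) • 1) (B - (((r + s) / 2 : ℝ) : 𝕜) • 1)‖ := by
        rw [traceDefect_sub_smul_one]
    _ ≤ ‖A - (((p + q) / 2 : ℝ) : 𝕜) • 1‖ * ‖B - (((r + s) / 2 : ℝ) : 𝕜) • 1‖
          * RCLike.re (trace (Z * Z)) :=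
        hZ.norm_traceDefect_le (hA.sub (isHermitian_one.smul (RCLike.conj_ofReal _)))
          (hB.sub (isHermitian_one.smul (RCLike.conj_ofReal _)))
    _ ≤ (p - q) / 2 * ((r - s) / 2) * RCLike.re (trace (Z * Z)) :=
        mul_le_mul_of_nonneg_right
          (mul_le_mul hA' hB' (norm_nonneg _) ((norm_nonneg _).trans hA')) htrace

end L2OpNorm

end Matrix

theorem gruss_trace_psd {n : ℕ} (Z A B : Matrix (Fin n) (Fin n) ℂ)
    (hZ : Z.PosSemidef) (hA : A.IsHermitian) (hB : B.IsHermitian)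
    (p q r s : ℝ)
    (hp : IsGreatest (Set.range hA.eigenvalues) p)
    (hq : IsLeast (Set.range hA.eigenvalues) q)
    (hr : IsGreatest (Set.range hB.eigenvalues) r)
    (hs : IsLeast (Set.range hB.eigenvalues) s) :
    ‖Matrix.trace (Z * Z * A * B) - Matrix.trace (Z * A * Z * B)‖ ≤
      (1 / 4) * (p - q) * (r - s) * (Matrix.trace (Z * Z)).re := by
  have : Nonempty (Fin n) := Set.range_nonempty_iff_nonempty.1 ⟨p, hp.1⟩
  refine (hZ.norm_traceDefect_le_of_eigenvalues_mem_Icc hA hB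
    (fun i => ⟨hq.2 ⟨i, rfl⟩, hp.2 ⟨i, rfl⟩⟩) (fun i => ⟨hs.2 ⟨i, rfl⟩, hr.2 ⟨i, rfl⟩⟩)).trans_eq ?_
  rw [RCLike.re_to_complex]
  ring
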